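/- arXiv:2501.09516 — 2 statements merged into one kernel-verified Lean document; each statement's English description precedes it below -/
import Mathlib

section
/- Let X ∈ St(n,r), let f : ℝ^{n×r} → ℝ be differentiable at X, let h : ℝ^{n×r} → ℝ be convex, and let B : ℝ^{n×r} → ℝ^{n×r} be a linear map that is self-adjoint for the trace inner product and maps T_X into itself. If V* minimizes φ(V) := ⟨∇f(X),V⟩ + (1/2)⟨V,BV⟩ + h(X+V) over the subspace T_X, then there exists ξ in the convex subdifferential ∂h(X+V*) of h at X+V* such that P_X(∇f(X)) + B[V*] + P_X(ξ) = 0. -/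
open Matrix

/-- The trace inner product `⟨A, B⟩ = tr(AᵀB)` on `ℝ^{n×r}`. -/
noncomputable def tinner {n r : ℕ} (A B : Matrix (Fin n) (Fin r) ℝ) : ℝ := (Aᵀ * B).trace

/-- `V` belongs to the tangent space `T_X = {V : VᵀX + XᵀV = 0}` of the Stiefel manifold at `X`. -/
def IsTangent {n r : ℕ} (X V : Matrix (Fin n) (Fin r) ℝ) : Prop := Vᵀ * X + Xᵀ * V = 0

/-- The orthogonal projection `P_X Z = Z - (1/2) X (XᵀZ + ZᵀX)` onto `T_X`. -/
noncomputable def projT {n r : ℕ} (X Z : Matrix (Fin n) (Fin r) ℝ) : Matrix (Fin n) (Fin r) ℝ :=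
  Z - (1 / 2 : ℝ) • (X * (Xᵀ * Z + Zᵀ * X))

/-- The (Euclidean) convex subdifferential of `h` at `Y`, w.r.t. the trace inner product. -/
def subdiff {n r : ℕ} (h : Matrix (Fin n) (Fin r) ℝ → ℝ) (Y : Matrix (Fin n) (Fin r) ℝ) :
    Set (Matrix (Fin n) (Fin r) ℝ) :=
  {ξ | ∀ Z, h Y + tinner ξ (Z - Y) ≤ h Z}

attribute [local instance] Matrix.frobeniusNormedAddCommGroup Matrix.frobeniusNormedSpace

/-!
Minimality of `V*` along the segments `t ↦ V* + t W` (`W ∈ T_X`, `t ↓ 0`), together with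
convexity of `h`, gives `h(X+V*) - ⟨G + B V*, W⟩ ≤ h(X+V*+W)` on `T_X`. Separating the open
convex strict epigraph of `h` from the affine graph of this lower bound produces a linear
functional which is a subgradient `ξ` of `h` at `X+V*` and equals `-⟨G + B V*, ·⟩` on `T_X`.
Then `Q = P_X G + B V* + P_X ξ` is tangent, so `⟨Q, Q⟩ = ⟨G + B V* + ξ, Q⟩ = 0`.
-/

open Set Filter Topology in
lemma nonneg_of_forall_mem_Ioc_nonneg_add_mul {a b : ℝ} (h : ∀ t ∈ Ioc (0 : ℝ) 1, 0 ≤ a + t * b) :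
    0 ≤ a := by
  have hlim : Tendsto (fun t => a + t * b) (𝓝 0) (𝓝 (a + 0 * b)) :=
    tendsto_const_nhds.add (tendsto_id.mul_const b)
  rw [zero_mul, add_zero] at hlim
  exact ge_of_tendsto (hlim.mono_left nhdsWithin_le_nhds)
    (eventually_of_mem (Ioc_mem_nhdsGT zero_lt_one) h)

lemma Matrix.trace_mul_eq_zero_of_isSymm_of_transpose_eq_neg {m : Type*} [Fintype m]
    {S K : Matrix m m ℝ} (hS : S.IsSymm) (hK : Kᵀ = -K) : (S * K).trace = 0 := by
  have : (S * K).trace = -(S * K).trace := by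
    conv_lhs => rw [← trace_transpose, transpose_mul, hK, hS.eq, Matrix.neg_mul, trace_neg,
      trace_mul_comm]
  linarith

lemma LinearMap.map_eq_zero_of_forall_le_map_add {M : Type*} [AddCommGroup M] [Module ℝ M]
    (f : M →ₗ[ℝ] ℝ) {P : Submodule ℝ M} {a : M} {u : ℝ} (h : ∀ p ∈ P, u ≤ f (a + p)) {p : M}
    (hp : p ∈ P) : f p = 0 := by
  by_contra hne
  have := h _ (P.smul_mem ((u - f a - 1) / f p) hp)
  rw [map_add, map_smul, smul_eq_mul, div_mul_cancel₀ _ hne] at this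
  linarith

section Subgradient

open Set Pointwise

variable {E : Type*} [AddCommGroup E] [Module ℝ E] [TopologicalSpace E]
  [IsTopologicalAddGroup E] [ContinuousSMul ℝ E]

theorem ConvexOn.exists_linear_subgradient_of_le_on_submodule {F : E → ℝ}
    (hF : ConvexOn ℝ univ F) (hFc : Continuous F) (S : Submodule ℝ E) (ℓ : E →ₗ[ℝ] ℝ) {x : E}
    (hℓ : ∀ w ∈ S, F x + ℓ w ≤ F (x + w)) :
    ∃ g : E →ₗ[ℝ] ℝ, (∀ z, F x + g (z - x) ≤ F z) ∧ ∀ w ∈ S, g w = ℓ w := by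
  set A : Set (E × ℝ) := {p | F p.1 < p.2}
  set T : Set (E × ℝ) := (x, F x) +ᵥ (S.map (LinearMap.id.prod ℓ) : Set (E × ℝ))
  have hA : Convex ℝ A := by simpa using hF.convex_strict_epigraph
  have hAo : IsOpen A := isOpen_lt (hFc.comp continuous_fst) continuous_snd
  have hT : Convex ℝ T := (S.map _).convex.vadd _
  have hAT : Disjoint A T := by
    refine Set.disjoint_left.2 fun p hpA hpT => ?_
    obtain ⟨_, ⟨w, hw, rfl⟩, rfl⟩ := hpT
    exact (hℓ w hw).not_gt (by simpa [A, add_comm] using hpA)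
  obtain ⟨Φ, u, hΦA, hΦT⟩ := geometric_hahn_banach_open hA hAo hT hAT
  have hΦ (v : E) (s : ℝ) : Φ (v, s) = Φ (v, 0) + s * Φ (0, 1) := by
    rw [← smul_eq_mul, ← map_smul, ← map_add]; simp
  have hux : u ≤ Φ (x, F x) := by simpa using hΦT _ ⟨0, zero_mem _, by simp⟩
  have hΦS (w) (hw : w ∈ S) : Φ (w, ℓ w) = 0 :=
    (Φ : E × ℝ →ₗ[ℝ] ℝ).map_eq_zero_of_forall_le_map_add (fun p hp => hΦT _ ⟨p, hp, rfl⟩)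
      (Submodule.mem_map_of_mem (f := LinearMap.id.prod ℓ) hw)
  have hα : Φ (0, 1) < 0 := by
    have := hΦA (x, F x + 1) (by simp [A])
    rw [hΦ] at this hux
    linarith
  -- rescale `Φ` so that the vertical direction `(0, 1)` gets weight `-1`
  refine ⟨(-Φ (0, 1))⁻¹ • (Φ.toLinearMap ∘ₗ LinearMap.inl ℝ E ℝ), fun z => ?_, fun w hw => ?_⟩
  · refine le_of_forall_gt_imp_ge_of_dense fun t ht => ?_
    have hzt := hΦA (z, t) ht
    rw [hΦ] at hzt hux
    have : (-Φ (0, 1))⁻¹ * (Φ (z, 0) - Φ (x, 0)) ≤ t - F x := by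
      rw [← div_eq_inv_mul, div_le_iff₀ (by linarith)]
      nlinarith
    simp only [LinearMap.smul_apply, LinearMap.comp_apply, LinearMap.inl_apply,
      ContinuousLinearMap.coe_coe, smul_eq_mul]
    rw [show ((z - x, 0) : E × ℝ) = (z, 0) - (x, 0) by simp, map_sub]
    linarith
  · have := hΦS w hw
    rw [hΦ] at this
    simp only [LinearMap.smul_apply, LinearMap.comp_apply, LinearMap.inl_apply,
      ContinuousLinearMap.coe_coe, smul_eq_mul]
    field_simp [hα.ne]
    linarith

end Subgradient

section TraceInner

variable {n r : ℕ}

lemma tinner_eq_sum (A B : Matrix (Fin n) (Fin r) ℝ) :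
    tinner A B = ∑ i, ∑ j, A i j * B i j := by
  simp only [tinner, Matrix.trace, Matrix.diag, Matrix.mul_apply, Matrix.transpose_apply]
  rw [Finset.sum_comm]

lemma tinner_comm (A B : Matrix (Fin n) (Fin r) ℝ) : tinner A B = tinner B A := by
  rw [tinner, ← trace_transpose, transpose_mul, transpose_transpose, tinner]

lemma tinner_add_left (A B C : Matrix (Fin n) (Fin r) ℝ) :
    tinner (A + B) C = tinner A C + tinner B C := by
  simp [tinner, Matrix.add_mul]

lemma tinner_add_right (A B C : Matrix (Fin n) (Fin r) ℝ) :
    tinner A (B + C) = tinner A B + tinner A C := by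
  simp [tinner, Matrix.mul_add]

lemma tinner_smul_left (c : ℝ) (A B : Matrix (Fin n) (Fin r) ℝ) :
    tinner (c • A) B = c * tinner A B := by
  simp [tinner]

lemma tinner_smul_right (c : ℝ) (A B : Matrix (Fin n) (Fin r) ℝ) :
    tinner A (c • B) = c * tinner A B := by
  simp [tinner]

noncomputable def tinnerₗ : Matrix (Fin n) (Fin r) ℝ →ₗ[ℝ] Matrix (Fin n) (Fin r) ℝ →ₗ[ℝ] ℝ :=
  LinearMap.mk₂ ℝ tinner tinner_add_left tinner_smul_left tinner_add_right tinner_smul_right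

@[simp] lemma tinnerₗ_apply (A B : Matrix (Fin n) (Fin r) ℝ) : tinnerₗ A B = tinner A B := rfl

lemma tinner_self_eq_zero {A : Matrix (Fin n) (Fin r) ℝ} : tinner A A = 0 ↔ A = 0 := by
  simpa [tinner, Matrix.conjTranspose_eq_transpose_of_trivial] using
    Matrix.trace_conjTranspose_mul_self_eq_zero_iff (A := A)

lemma tinner_of_single (g : Matrix (Fin n) (Fin r) ℝ →ₗ[ℝ] ℝ) (U : Matrix (Fin n) (Fin r) ℝ) :
    tinner (Matrix.of fun i j => g (Matrix.single i j 1)) U = g U := by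
  conv_rhs => rw [Matrix.matrix_eq_sum_single U]
  have single_eq (i j) : Matrix.single i j (U i j) = U i j • Matrix.single i j (1 : ℝ) := by
    rw [Matrix.smul_single, smul_eq_mul, mul_one]
  simp only [tinner_eq_sum, Matrix.of_apply, map_sum, single_eq, map_smul, smul_eq_mul, mul_comm]

end TraceInner

section Tangent

variable {n r : ℕ}

def tangentSpace (X : Matrix (Fin n) (Fin r) ℝ) : Submodule ℝ (Matrix (Fin n) (Fin r) ℝ) where
  carrier := {V | IsTangent X V}
  add_mem' {V W} hV hW := by
    simp only [Set.mem_ofPred_eq, IsTangent, transpose_add, Matrix.add_mul, Matrix.mul_add] at *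
    rw [add_add_add_comm, hV, hW, add_zero]
  zero_mem' := by simp [IsTangent]
  smul_mem' c V hV := by
    simp only [Set.mem_ofPred_eq, IsTangent, transpose_smul, Matrix.smul_mul, Matrix.mul_smul] at *
    rw [← smul_add, hV, smul_zero]

lemma mem_tangentSpace {X V : Matrix (Fin n) (Fin r) ℝ} : V ∈ tangentSpace X ↔ IsTangent X V :=
  Iff.rfl

lemma isSymm_transpose_mul_add (X Z : Matrix (Fin n) (Fin r) ℝ) : (Xᵀ * Z + Zᵀ * X).IsSymm := by
  simp [Matrix.IsSymm, transpose_mul, add_comm]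

lemma projT_mem_tangentSpace {X : Matrix (Fin n) (Fin r) ℝ} (hX : Xᵀ * X = 1)
    (Z : Matrix (Fin n) (Fin r) ℝ) : projT X Z ∈ tangentSpace X := by
  have hS := (isSymm_transpose_mul_add X Z).eq
  simp only [mem_tangentSpace, IsTangent, projT, transpose_sub, transpose_smul, transpose_mul, hS,
    Matrix.sub_mul, Matrix.mul_sub, Matrix.smul_mul, Matrix.mul_smul, Matrix.mul_assoc, hX,
    ← Matrix.mul_assoc Xᵀ X, Matrix.one_mul, Matrix.mul_one]
  module

lemma tinner_projT_of_mem {X W : Matrix (Fin n) (Fin r) ℝ} (hW : W ∈ tangentSpace X)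
    (Z : Matrix (Fin n) (Fin r) ℝ) : tinner (projT X Z) W = tinner Z W := by
  have hK : (Xᵀ * W)ᵀ = -(Xᵀ * W) := by
    rw [transpose_mul, transpose_transpose, eq_neg_iff_add_eq_zero]; exact hW
  have := trace_mul_eq_zero_of_isSymm_of_transpose_eq_neg (isSymm_transpose_mul_add X Z) hK
  simp [tinner, projT, transpose_mul, (isSymm_transpose_mul_add X Z).eq, Matrix.sub_mul,
    Matrix.mul_assoc, this]

end Tangent

section Optimality

variable {n r : ℕ} {X G Vs W : Matrix (Fin n) (Fin r) ℝ} {h φ : Matrix (Fin n) (Fin r) ℝ → ℝ}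
  {B : Matrix (Fin n) (Fin r) ℝ →ₗ[ℝ] Matrix (Fin n) (Fin r) ℝ}

lemma tinner_map_add_smul (hBsa : ∀ U V, tinner U (B V) = tinner (B U) V) (V W) (t : ℝ) :
    tinner (V + t • W) (B (V + t • W)) =
      tinner V (B V) + 2 * t * tinner (B V) W + t ^ 2 * tinner W (B W) := by
  simp only [map_add, map_smul, tinner_add_left, tinner_add_right, tinner_smul_left,
    tinner_smul_right, hBsa V W, tinner_comm W (B V)]
  ring

lemma sub_tinner_le_of_isMinOn (hconv : ConvexOn ℝ Set.univ h)
    (hBsa : ∀ U V, tinner U (B V) = tinner (B U) V)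
    (hφ : ∀ V, φ V = tinner G V + (1 / 2) * tinner V (B V) + h (X + V))
    (hVs : Vs ∈ tangentSpace X) (hmin : IsMinOn φ (tangentSpace X) Vs)
    (hW : W ∈ tangentSpace X) :
    h (X + Vs) - tinner (G + B Vs) W ≤ h (X + Vs + W) := by
  suffices ∀ t ∈ Set.Ioc (0 : ℝ) 1,
      0 ≤ (tinner (G + B Vs) W + h (X + Vs + W) - h (X + Vs)) + t * (tinner W (B W) / 2) by
    linarith [nonneg_of_forall_mem_Ioc_nonneg_add_mul this]
  rintro t ⟨ht0, ht1⟩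
  have hφt := isMinOn_iff.1 hmin _ (add_mem hVs (Submodule.smul_mem _ t hW))
  rw [hφ, hφ, tinner_map_add_smul hBsa, tinner_add_right, tinner_smul_right,
    ← add_assoc] at hφt
  have hconv_t := hconv.2 (Set.mem_univ (X + Vs)) (Set.mem_univ (X + Vs + W))
    (sub_nonneg.2 ht1) ht0.le (sub_add_cancel 1 t)
  rw [show (1 - t) • (X + Vs) + t • (X + Vs + W) = X + Vs + t • W by module, smul_eq_mul,
    smul_eq_mul] at hconv_t
  refine nonneg_of_mul_nonneg_right ?_ ht0
  rw [tinner_add_left]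
  nlinarith

end Optimality

theorem stmt2_general {n r : ℕ} (X : Matrix (Fin n) (Fin r) ℝ) (hX : Xᵀ * X = 1)
    (h : Matrix (Fin n) (Fin r) ℝ → ℝ)
    (G : Matrix (Fin n) (Fin r) ℝ)
    -- `h` is convex
    (hconv : ConvexOn ℝ Set.univ h)
    -- `B` is linear, self-adjoint for the trace inner product and maps `T_X` into itself
    (B : Matrix (Fin n) (Fin r) ℝ →ₗ[ℝ] Matrix (Fin n) (Fin r) ℝ)
    (hBsa : ∀ U V, tinner U (B V) = tinner (B U) V)
    (hBtan : ∀ V, IsTangent X V → IsTangent X (B V))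
    -- the objective `φ(V) = ⟨∇f(X),V⟩ + (1/2)⟨V,BV⟩ + h(X+V)`
    (φ : Matrix (Fin n) (Fin r) ℝ → ℝ)
    (hφ : ∀ V, φ V = tinner G V + (1 / 2) * tinner V (B V) + h (X + V))
    -- `V*` minimizes `φ` over `T_X`
    (Vs : Matrix (Fin n) (Fin r) ℝ) (hVs : IsTangent X Vs)
    (hmin : ∀ V, IsTangent X V → φ Vs ≤ φ V) :
    ∃ ξ ∈ subdiff h (X + Vs), projT X G + B Vs + projT X ξ = 0 := by
  have hcont : Continuous h := continuousOn_univ.1 (hconv.continuousOn isOpen_univ)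
  obtain ⟨g, hg_sub, hg_tan⟩ := hconv.exists_linear_subgradient_of_le_on_submodule hcont
    (tangentSpace X) (-tinnerₗ (G + B Vs)) (x := X + Vs) fun W hW => by
      simpa only [LinearMap.neg_apply, tinnerₗ_apply, ← sub_eq_add_neg] using
        sub_tinner_le_of_isMinOn hconv hBsa hφ hVs (isMinOn_iff.2 hmin) hW
  set ξ := Matrix.of fun i j => g (Matrix.single i j 1)
  refine ⟨ξ, fun Z => by simpa [ξ, tinner_of_single] using hg_sub Z, ?_⟩
  set Q := projT X G + B Vs + projT X ξ
  have hQ : Q ∈ tangentSpace X := add_mem (add_mem (projT_mem_tangentSpace hX G) (hBtan Vs hVs))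
    (projT_mem_tangentSpace hX ξ)
  rw [← tinner_self_eq_zero]
  calc tinner Q Q = tinner (G + B Vs) Q + g Q := by
        rw [tinner_add_left, tinner_add_left, tinner_projT_of_mem hQ, tinner_projT_of_mem hQ,
          tinner_of_single, tinner_add_left]
    _ = 0 := by rw [hg_tan Q hQ, LinearMap.neg_apply, tinnerₗ_apply, add_neg_cancel]

theorem stmt2 {n r : ℕ} (X : Matrix (Fin n) (Fin r) ℝ) (hX : Xᵀ * X = 1)
    (f h : Matrix (Fin n) (Fin r) ℝ → ℝ)
    -- `f` is differentiable at `X` with (Euclidean) gradient `G = ∇f(X)`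
    (G : Matrix (Fin n) (Fin r) ℝ) (Lf : Matrix (Fin n) (Fin r) ℝ →L[ℝ] ℝ)
    (hf : HasFDerivAt f Lf X) (hGrad : ∀ V, Lf V = tinner G V)
    -- `h` is convex
    (hconv : ConvexOn ℝ Set.univ h)
    -- `B` is linear, self-adjoint for the trace inner product and maps `T_X` into itself
    (B : Matrix (Fin n) (Fin r) ℝ →ₗ[ℝ] Matrix (Fin n) (Fin r) ℝ)
    (hBsa : ∀ U V, tinner U (B V) = tinner (B U) V)
    (hBtan : ∀ V, IsTangent X V → IsTangent X (B V))
    -- the objective `φ(V) = ⟨∇f(X),V⟩ + (1/2)⟨V,BV⟩ + h(X+V)`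
    (φ : Matrix (Fin n) (Fin r) ℝ → ℝ)
    (hφ : ∀ V, φ V = tinner G V + (1 / 2) * tinner V (B V) + h (X + V))
    -- `V*` minimizes `φ` over `T_X`
    (Vs : Matrix (Fin n) (Fin r) ℝ) (hVs : IsTangent X Vs)
    (hmin : ∀ V, IsTangent X V → φ Vs ≤ φ V) :
    ∃ ξ ∈ subdiff h (X + Vs), projT X G + B Vs + projT X ξ = 0 :=
  stmt2_general X hX h G hconv B hBsa hBtan φ hφ Vs hVs hmin
end

section
/- Let (F_k)_{k≥0} be a sequence of real numbers, let m be a nonnegative integer, and define M_k := max_{max(k−m,0) ≤ j ≤ k} F_j. If F_{k+1} ≤ M_k for all k, then the sequence (M_k) is nonincreasing; consequently, if (F_k) is bounded below, then (M_k) converges. -/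
open Filter

section WindowMax

variable {α : Type*} [SemilatticeSup α] (F : ℕ → α) (m : ℕ)

/-- Truncated subtraction on `ℕ` makes the window start at `max(k - m, 0)`. -/
def windowMax (k : ℕ) : α :=
  (Finset.Icc (k - m) k).sup' (Finset.nonempty_Icc.mpr (Nat.sub_le k m)) F

variable {F m}

theorem le_windowMax (k : ℕ) : F k ≤ windowMax F m k :=
  Finset.le_sup' F (Finset.mem_Icc.mpr ⟨Nat.sub_le k m, le_rfl⟩)

theorem le_windowMax_of_mem {j k : ℕ} (hj : k - m ≤ j) (hjk : j ≤ k) : F j ≤ windowMax F m k :=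
  Finset.le_sup' F (Finset.mem_Icc.mpr ⟨hj, hjk⟩)

/-- The window at `k + 1` is the window at `k` shifted by one: every index except `k + 1`
already lies in the window at `k`. -/
theorem windowMax_succ_le {k : ℕ} (h : F (k + 1) ≤ windowMax F m k) :
    windowMax F m (k + 1) ≤ windowMax F m k := by
  refine Finset.sup'_le _ _ fun j hj => ?_
  obtain ⟨hlo, hhi⟩ := Finset.mem_Icc.mp hj
  rcases Nat.lt_or_ge j (k + 1) with hlt | hge
  · exact le_windowMax_of_mem (by omega) (by omega)
  · obtain rfl : j = k + 1 := le_antisymm hhi hge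
    exact h

theorem antitone_windowMax (h : ∀ k, F (k + 1) ≤ windowMax F m k) :
    Antitone (windowMax F m) :=
  antitone_nat_of_succ_le fun k => windowMax_succ_le (h k)

theorem bddBelow_range_windowMax {b : α} (hb : ∀ k, b ≤ F k) :
    BddBelow (Set.range (windowMax F m)) :=
  ⟨b, Set.forall_mem_range.mpr fun k => (hb k).trans (le_windowMax k)⟩

end WindowMax

theorem stmt14 (F : ℕ → ℝ) (m : ℕ)
    -- `M_k` is the sliding-window maximum `max_{max(k-m,0) ≤ j ≤ k} F_j`
    (M : ℕ → ℝ)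
    (hM : ∀ k, M k =
      (Finset.Icc (k - m) k).sup' (Finset.nonempty_Icc.mpr (Nat.sub_le k m)) F)
    (hdec : ∀ k, F (k + 1) ≤ M k) :
    (∀ k, M (k + 1) ≤ M k) ∧
      ((∃ b : ℝ, ∀ k, b ≤ F k) → ∃ l : ℝ, Tendsto M atTop (nhds l)) := by
  obtain rfl : M = windowMax F m := funext hM
  have hanti : Antitone (windowMax F m) := antitone_windowMax hdec
  refine ⟨fun k => hanti (Nat.le_succ k), ?_⟩
  rintro ⟨b, hb⟩
  exact ⟨_, tendsto_atTop_ciInf hanti (bddBelow_range_windowMax hb)⟩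
end
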